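/- Let a ≤ b and c ≤ d be real numbers with integer differences, and suppose (a+b)/2 ≤ d and c - 1 < (a+b)/2 strictly. Set s = min{s'' ∈ [c,d] ∩ (c + ℤ) : s'' ≥ (a+b)/2}. Then c ≠ b + 1, and for any a', b' with (a'+b')/2 ≥ (a+b)/2, one has s - 1 < (a'+b')/2 strictly. -/
import Mathlib


/-- the arithmetic content of Lemma 7.6 of the paper.  Let `a ≤ b` and
`c ≤ d` be real numbers with integer differences, with `(a+b)/2 ≤ d` and `c - 1 < (a+b)/2`
strictly.  Set `s = min { s'' ∈ [c,d] ∩ (c + ℤ) : s'' ≥ (a+b)/2 }` (the minimum exists by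
the hypothesis `(a+b)/2 ≤ d`).  Then `c ≠ b + 1`, and for any `a', b'` with
`(a'+b')/2 ≥ (a+b)/2`, one has `s - 1 < (a'+b')/2` strictly. -/
theorem stmt13
    (a b c d : ℝ) (m n : ℕ)
    (hab : b = a + m) (hcd : d = c + n)
    (hmid : (a + b) / 2 ≤ d)
    (hc : c - 1 < (a + b) / 2)
    (s : ℝ)
    -- s is a point of [c,d] ∩ (c + ℤ) with s ≥ (a+b)/2 …
    (hs_mem : ∃ j : ℕ, s = c + (j : ℝ) ∧ s ≤ d ∧ (a + b) / 2 ≤ s)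
    -- … and is minimal among such points
    (hs_min : ∀ j : ℕ, c + (j : ℝ) ≤ d → (a + b) / 2 ≤ c + (j : ℝ) → s ≤ c + (j : ℝ)) :
    c ≠ b + 1 ∧ ∀ a' b' : ℝ, (a + b) / 2 ≤ (a' + b') / 2 → s - 1 < (a' + b') / 2 := by
  have hm : (0:ℝ) ≤ (m:ℝ) := Nat.cast_nonneg m
  constructor
  · intro h
    rw [h, hab] at hc
    linarith
  · intro a' b' h
    have key : s - 1 < (a + b) / 2 := by
      obtain ⟨j, hj, hjd, hjs⟩ := hs_mem
      cases j with
      | zero => simp at hj; linarith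
      | succ k =>
        by_contra hcon
        push_neg at hcon
        have h1 : c + (k : ℝ) ≤ d := by
          push_cast at hj; linarith
        have h2 : (a + b) / 2 ≤ c + (k : ℝ) := by
          push_cast at hj; linarith
        have := hs_min k h1 h2
        push_cast at hj
        linarith
    linarith
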